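/- For any real p with 0 < p ≤ 1 and integers m, K with 1 ≤ m ≤ K, it holds that m·(1 - (1-p)^K)/K ≤ 1 - (1-p)^m. -/

import Mathlib

/-!
Writing `q = 1 - p`, we have `1 - q ^ n = p * ∑ i < n, q ^ i`, so the claim says that the average
of the first `n` terms of the nonincreasing sequence `q ^ i` is nonincreasing in `n`.
-/

open Finset

theorem Antitone.mul_sum_range_le_mul_sum_range {R : Type*} [CommSemiring R] [PartialOrder R]
    [IsOrderedRing R] {f : ℕ → R} (hf : Antitone f) {m K : ℕ} (hmK : m ≤ K) :
    (m : R) * ∑ i ∈ range K, f i ≤ K * ∑ i ∈ range m, f i := by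
  obtain ⟨n, rfl⟩ := Nat.exists_eq_add_of_le hmK
  have head : (m : R) * f m ≤ ∑ i ∈ range m, f i := by
    simpa using card_nsmul_le_sum (range m) f (f m) fun i hi => hf (mem_range.1 hi).le
  have tail : ∑ i ∈ range n, f (m + i) ≤ n * f m := by
    simpa using sum_le_card_nsmul (range n) (fun i => f (m + i)) (f m)
      fun i _ => hf (Nat.le_add_right m i)
  calc (m : R) * ∑ i ∈ range (m + n), f i
      = m * ∑ i ∈ range m, f i + m * ∑ i ∈ range n, f (m + i) := by
        rw [sum_range_add, mul_add]
    _ ≤ m * ∑ i ∈ range m, f i + n * (m * f m) := by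
        rw [mul_left_comm]
        gcongr
    _ ≤ m * ∑ i ∈ range m, f i + n * ∑ i ∈ range m, f i := by gcongr
    _ = ((m + n : ℕ) : R) * ∑ i ∈ range m, f i := by push_cast; ring

theorem stmt_3_general (p : ℝ) (hp0 : 0 < p) (hp1 : p ≤ 1) (m K : ℕ)
    (hmK : m ≤ K) :
    (m : ℝ) * (1 - (1 - p) ^ K) / K ≤ 1 - (1 - p) ^ m := by
  set q : ℝ := 1 - p
  have hq0 : 0 ≤ q := by linarith
  have hq1 : q ≤ 1 := by linarith
  have hanti : Antitone (q ^ ·) := fun _ _ h => pow_le_pow_of_le_one hq0 hq1 h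
  have key : (m : ℝ) * (1 - q ^ K) ≤ (1 - q ^ m) * K := by
    rw [← mul_neg_geom_sum, ← mul_neg_geom_sum]
    linear_combination (1 - q) * hanti.mul_sum_range_le_mul_sum_range hmK
  exact div_le_of_le_mul₀ K.cast_nonneg (sub_nonneg.2 (pow_le_one₀ hq0 hq1)) key

theorem stmt_3 (p : ℝ) (hp0 : 0 < p) (hp1 : p ≤ 1) (m K : ℕ)
    (hm : 1 ≤ m) (hmK : m ≤ K) :
    (m : ℝ) * (1 - (1 - p) ^ K) / K ≤ 1 - (1 - p) ^ m :=
  stmt_3_general p hp0 hp1 m K hmK
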